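/- arXiv:1805.02151 — 4 statements merged into one kernel-verified Lean document; each statement's English description precedes it below -/
import Mathlib

section
/- Let f, g : ℝ → ℝ with f(x) = 1 + 2x - √(1+4x). Then for all real x with 0 ≤ x ≤ 1/4, one has x² ≤ f(x) ≤ 3x². -/
/-!
Rationalising, `f x * (1 + 2x + √(1 + 4x)) = 4x²`, and for `0 ≤ x ≤ 1/4` the second factor lies
between `2` and `3`; hence `4x²/3 ≤ f x ≤ 2x²`.
-/

lemma sqrt_one_add_four_mul_le {x : ℝ} (hx : 0 ≤ 1 + 2 * x) : √(1 + 4 * x) ≤ 1 + 2 * x :=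
  Real.sqrt_le_iff.mpr ⟨hx, by nlinarith [sq_nonneg x]⟩

lemma one_add_two_mul_sub_sqrt_nonneg {x : ℝ} (hx : 0 ≤ 1 + 2 * x) :
    0 ≤ 1 + 2 * x - √(1 + 4 * x) :=
  sub_nonneg.mpr (sqrt_one_add_four_mul_le hx)

lemma one_add_two_mul_sub_sqrt_mul_add {x : ℝ} (hx : 0 ≤ 1 + 4 * x) :
    (1 + 2 * x - √(1 + 4 * x)) * (1 + 2 * x + √(1 + 4 * x)) = 4 * x ^ 2 := by
  linear_combination -Real.sq_sqrt hx

lemma four_mul_sq_le_two_mul_one_add_two_mul_sub_sqrt {x : ℝ} (hx : 0 ≤ 1 + 4 * x) :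
    4 * x ^ 2 ≤ 2 * (1 + 2 * x) * (1 + 2 * x - √(1 + 4 * x)) := by
  have h2x : 0 ≤ 1 + 2 * x := by linarith
  rw [← one_add_two_mul_sub_sqrt_mul_add hx, mul_comm]
  gcongr
  · exact one_add_two_mul_sub_sqrt_nonneg h2x
  · linarith [sqrt_one_add_four_mul_le h2x]

lemma one_add_two_mul_sub_sqrt_le_two_mul_sq {x : ℝ} (hx : 0 ≤ x) :
    1 + 2 * x - √(1 + 4 * x) ≤ 2 * x ^ 2 := by
  have hf := one_add_two_mul_sub_sqrt_nonneg (x := x) (by linarith)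
  have hs : 1 ≤ √(1 + 4 * x) := Real.one_le_sqrt.mpr (by linarith)
  have h2 : 2 * (1 + 2 * x - √(1 + 4 * x)) ≤ 2 * (2 * x ^ 2) :=
    calc 2 * (1 + 2 * x - √(1 + 4 * x))
        ≤ (1 + 2 * x - √(1 + 4 * x)) * (1 + 2 * x + √(1 + 4 * x)) := by
          rw [mul_comm]; gcongr; linarith
      _ = 2 * (2 * x ^ 2) := by rw [one_add_two_mul_sub_sqrt_mul_add (by linarith)]; ring
  linarith

theorem stmt_0 (f : ℝ → ℝ)
    (hf : ∀ x : ℝ, f x = 1 + 2 * x - Real.sqrt (1 + 4 * x)) :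
    ∀ x : ℝ, 0 ≤ x → x ≤ 1 / 4 → x ^ 2 ≤ f x ∧ f x ≤ 3 * x ^ 2 := by
  intro x hx hx4
  rw [hf]
  have hf0 := one_add_two_mul_sub_sqrt_nonneg (x := x) (by linarith)
  have hlower := four_mul_sq_le_two_mul_one_add_two_mul_sub_sqrt (x := x) (by linarith)
  have hupper := one_add_two_mul_sub_sqrt_le_two_mul_sq hx
  constructor
  · linarith [sq_nonneg x, mul_nonneg hf0 (by linarith : (0:ℝ) ≤ 1 / 4 - x)]
  · linarith [sq_nonneg x]
end

section
/- Suppose X : [0,∞) → ℝ is differentiable, X(0) = A > 1/4, and X'(t) + 1 + 2X(t) - √(1+4X(t)) = 0 for all t ≥ 0, with X(t) > 0 for all t. If t_* ≥ 0 is such that X(t_*) = 1/4 and X(t) ≥ 1/4 for t ∈ [0, t_*], then A·exp(-6t) ≤ X(t) ≤ A·exp(-t/4) for all t ∈ [0, t_*]. -/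
/-! On `[0, t_*]` we have `X ≥ 1/4`, where the nonlinearity `1 + 2X - √(1 + 4X)` lies
between `X/4` and `6X`, so `-6X ≤ X' ≤ -X/4`. Hence `X(t) e^{6t}` is nondecreasing and
`X(t) e^{t/4}` is nonincreasing on `[0, t_*]`, and comparing with `t = 0` gives both bounds. -/

open Real Set

/-- With `s = √(1 + 4x)` the middle term is `(s - 1)² / 2` and `x = (s² - 1) / 4`;
the bound amounts to `s ≥ 9/7`, which holds since `s ≥ √2`. -/
lemma div_four_le_one_add_two_mul_sub_sqrt {x : ℝ} (hx : 1 / 4 ≤ x) :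
    x / 4 ≤ 1 + 2 * x - √(1 + 4 * x) := by
  have hsq : √(1 + 4 * x) ^ 2 = 1 + 4 * x := sq_sqrt (by linarith)
  have hs : 9 / 7 ≤ √(1 + 4 * x) := by nlinarith [sqrt_nonneg (1 + 4 * x)]
  nlinarith

lemma one_add_two_mul_sub_sqrt_le {x : ℝ} (hx : 0 ≤ x) :
    1 + 2 * x - √(1 + 4 * x) ≤ 6 * x := by
  nlinarith [one_le_sqrt.mpr (by linarith : 1 ≤ 1 + 4 * x)]

section Comparison

variable {f : ℝ → ℝ}

lemma hasDerivAt_mul_exp_neg_mul (hf : Differentiable ℝ f) (c t : ℝ) :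
    HasDerivAt (fun u => f u * exp (-c * u)) ((deriv f t - c * f t) * exp (-c * t)) t := by
  have he : HasDerivAt (fun u => exp (-c * u)) (exp (-c * t) * -c) t := by
    simpa using ((hasDerivAt_id t).const_mul (-c)).exp
  exact ((hf t).hasDerivAt.mul he).congr_deriv (by ring)

lemma le_mul_exp_of_deriv_le {a b c : ℝ} (hf : Differentiable ℝ f)
    (hderiv : ∀ t ∈ Ioo a b, deriv f t ≤ c * f t) :
    ∀ t ∈ Icc a b, f t ≤ f a * exp (c * (t - a)) := by
  have hanti : AntitoneOn (fun u => f u * exp (-c * u)) (Icc a b) := by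
    refine antitoneOn_of_deriv_nonpos (convex_Icc a b)
      (fun t _ => (hasDerivAt_mul_exp_neg_mul hf c t).continuousAt.continuousWithinAt)
      (fun t _ => (hasDerivAt_mul_exp_neg_mul hf c t).differentiableAt.differentiableWithinAt) ?_
    intro t ht
    rw [interior_Icc] at ht
    rw [(hasDerivAt_mul_exp_neg_mul hf c t).deriv]
    exact mul_nonpos_of_nonpos_of_nonneg (by linarith [hderiv t ht]) (exp_pos _).le
  intro t ht
  have h := hanti (left_mem_Icc.mpr (ht.1.trans ht.2)) ht ht.1
  have hexp : exp (c * (t - a)) = exp (-c * a) * (exp (-c * t))⁻¹ := by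
    rw [← exp_neg, ← exp_add]; ring_nf
  rw [hexp, ← mul_assoc, ← div_eq_mul_inv, le_div_iff₀ (exp_pos _)]
  exact h

lemma mul_exp_le_of_le_deriv {a b c : ℝ} (hf : Differentiable ℝ f)
    (hderiv : ∀ t ∈ Ioo a b, c * f t ≤ deriv f t) :
    ∀ t ∈ Icc a b, f a * exp (c * (t - a)) ≤ f t := by
  intro t ht
  have h := le_mul_exp_of_deriv_le (f := -f) (c := c) hf.neg
    (fun t ht => by rw [deriv.neg, Pi.neg_apply]; linarith [hderiv t ht]) t ht
  simp only [Pi.neg_apply, neg_mul] at h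
  linarith

end Comparison

theorem stmt_2_general (X : ℝ → ℝ) (A tstar : ℝ)
    (hdiff : Differentiable ℝ X)
    (hX0 : X 0 = A)
    (hODE : ∀ t : ℝ, 0 ≤ t → deriv X t + 1 + 2 * X t - Real.sqrt (1 + 4 * X t) = 0)
    (hge : ∀ t ∈ Set.Icc (0 : ℝ) tstar, 1 / 4 ≤ X t) :
    ∀ t ∈ Set.Icc (0 : ℝ) tstar,
      A * Real.exp (-6 * t) ≤ X t ∧ X t ≤ A * Real.exp (-t / 4) := by
  have hderiv (t : ℝ) (ht : t ∈ Ioo 0 tstar) :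
      -6 * X t ≤ deriv X t ∧ deriv X t ≤ -(1 / 4) * X t := by
    have hX := hge t (Ioo_subset_Icc_self ht)
    have hode := hODE t ht.1.le
    constructor
    · linarith [one_add_two_mul_sub_sqrt_le (by linarith : 0 ≤ X t)]
    · linarith [div_four_le_one_add_two_mul_sub_sqrt hX]
  intro t ht
  have hlower := mul_exp_le_of_le_deriv hdiff (fun s hs => (hderiv s hs).1) t ht
  have hupper := le_mul_exp_of_deriv_le hdiff (fun s hs => (hderiv s hs).2) t ht
  rw [hX0, sub_zero] at hlower hupper
  exact ⟨hlower, by convert hupper using 3; ring⟩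

theorem stmt_2 (X : ℝ → ℝ) (A tstar : ℝ)
    (hdiff : Differentiable ℝ X)
    (hX0 : X 0 = A) (hA : 1 / 4 < A)
    (hODE : ∀ t : ℝ, 0 ≤ t → deriv X t + 1 + 2 * X t - Real.sqrt (1 + 4 * X t) = 0)
    (hpos : ∀ t : ℝ, 0 ≤ t → 0 < X t)
    (htstar : 0 ≤ tstar) (hXtstar : X tstar = 1 / 4)
    (hge : ∀ t ∈ Set.Icc (0 : ℝ) tstar, 1 / 4 ≤ X t) :
    ∀ t ∈ Set.Icc (0 : ℝ) tstar,
      A * Real.exp (-6 * t) ≤ X t ∧ X t ≤ A * Real.exp (-t / 4) :=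
  stmt_2_general X A tstar hdiff hX0 hODE hge
end

section
/- Let v, v_*, v' ∈ ℝ³ with v' = (v+v_*)/2 + (|v-v_*|/2)σ for some σ ∈ 𝕊², and suppose cos θ = ((v-v_*)/|v-v_*|)·σ ≥ 0 (i.e. θ ∈ [0, π/2]). If |v - v_*| ≥ 10|v|, then |v'_*| ≥ (1/5)|v - v_*|, where v'_* = (v+v_*)/2 - (|v-v_*|/2)σ. -/
/-!
Write `w = v - v_*` and `r = ‖w‖`. Then `v - v'_* = w / 2 + (r / 2) σ`, whose squared norm is
`r² / 2 + (r / 2) ⟪w, σ⟫ ≥ r² / 2` because `cos θ ≥ 0`. Hence `‖v - v'_*‖ ≥ r / √2`, and the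
triangle inequality with `‖v‖ ≤ r / 10` gives `‖v'_*‖ ≥ (1 / √2 - 1 / 10) r ≥ r / 5`.
-/

open scoped RealInnerProductSpace

section Collision

variable {E : Type*} [NormedAddCommGroup E] [InnerProductSpace ℝ E]

lemma inner_nonneg_of_inner_inv_norm_smul_nonneg {w σ : E} (h : 0 ≤ ⟪‖w‖⁻¹ • w, σ⟫) :
    0 ≤ ⟪w, σ⟫ := by
  rcases eq_or_ne w 0 with rfl | hw
  · simp
  · rw [real_inner_smul_left] at h
    exact nonneg_of_mul_nonneg_right h (by positivity)

lemma norm_half_smul_add_smul_sq {σ : E} (hσ : ‖σ‖ = 1) (w : E) :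
    ‖(1 / 2 : ℝ) • w + (‖w‖ / 2) • σ‖ ^ 2 = ‖w‖ ^ 2 / 2 + ‖w‖ / 2 * ⟪w, σ⟫ := by
  rw [norm_add_sq_real, norm_smul, norm_smul, real_inner_smul_left, real_inner_smul_right, hσ,
    Real.norm_of_nonneg (by positivity), Real.norm_of_nonneg (by positivity)]
  ring

lemma norm_div_sqrt_two_le_norm_half_smul_add_smul {w σ : E} (hσ : ‖σ‖ = 1)
    (hwσ : 0 ≤ ⟪w, σ⟫) : ‖w‖ / √2 ≤ ‖(1 / 2 : ℝ) • w + (‖w‖ / 2) • σ‖ := by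
  rw [← pow_le_pow_iff_left₀ (by positivity) (norm_nonneg _) two_ne_zero,
    norm_half_smul_add_smul_sq hσ, div_pow, Real.sq_sqrt zero_le_two]
  have : 0 ≤ ‖w‖ / 2 * ⟪w, σ⟫ := by positivity
  linarith

end Collision

theorem stmt_11_general (v vs σ : EuclideanSpace ℝ (Fin 3)) (hσ : ‖σ‖ = 1)
    (hcos : 0 ≤ ⟪‖v - vs‖⁻¹ • (v - vs), σ⟫)
    (hfar : 10 * ‖v‖ ≤ ‖v - vs‖) :
    (1 / 5 : ℝ) * ‖v - vs‖ ≤ ‖(1 / 2 : ℝ) • (v + vs) - (‖v - vs‖ / 2) • σ‖ := by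
  set vs' := (1 / 2 : ℝ) • (v + vs) - (‖v - vs‖ / 2) • σ
  have hdiff : v - vs' = (1 / 2 : ℝ) • (v - vs) + (‖v - vs‖ / 2) • σ := by
    simp only [vs']
    module
  have hdev : ‖v - vs‖ / √2 ≤ ‖v - vs'‖ := hdiff ▸
    norm_div_sqrt_two_le_norm_half_smul_add_smul hσ
      (inner_nonneg_of_inner_inv_norm_smul_nonneg hcos)
  have hsqrt : (3 / 10 : ℝ) * ‖v - vs‖ ≤ ‖v - vs‖ / √2 := by
    rw [le_div_iff₀ (by positivity)]
    nlinarith [Real.sqrt_two_lt_three_halves, norm_nonneg (v - vs)]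
  linarith [norm_sub_le v vs']

theorem stmt_11 (v vs σ : EuclideanSpace ℝ (Fin 3)) (hσ : ‖σ‖ = 1) (hne : v ≠ vs)
    (hcos : 0 ≤ ⟪‖v - vs‖⁻¹ • (v - vs), σ⟫)
    (hfar : 10 * ‖v‖ ≤ ‖v - vs‖) :
    (1 / 5 : ℝ) * ‖v - vs‖ ≤ ‖(1 / 2 : ℝ) • (v + vs) - (‖v - vs‖ / 2) • σ‖ :=
  stmt_11_general v vs σ hσ hcos hfar
end

section
/- For all u ∈ ℝ³ \ {0} and σ ∈ 𝕊² with (u/|u|)·σ ≥ 0, let u⁺ = (u + |u|σ)/2 and let w = |u|·u⁺/|u⁺| (note u⁺ ≠ 0). Then |w| = |u|, and for any l ∈ ℝ the Japanese bracket weights satisfy ⟨w⟩^l = ⟨u⟩^l. Moreover |u⁺| = |u| cos(θ/2) where cos θ = (u/|u|)·σ, and |⟨w⟩^{l}⟨u⁺⟩^{-l} - 1| ≤ C(l)·θ² uniformly for θ ∈ [0, π/2] and u with |u| ≥ 1. -/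
/-!
Write `t = ⟪u/|u|, σ⟫ = cos θ`. Expanding the square gives `|u⁺|² = |u|² (1 + t)/2`, which is
positive for `t ≥ 0`, and `(1 + cos θ)/2 = cos² (θ/2)` yields `|u⁺| = |u| cos (θ/2)`. Rescaling
`u⁺` to length `|u|` preserves the bracket `⟨u⟩` exactly. For the radial part,
`r = ⟨u⟩²/⟨u⁺⟩²` lies in `[1, 2]` with `r - 1 ≤ 1 - t ≤ θ²/2`, and `r ↦ r ^ (l/2)` is Lipschitz
on `[1, 2]`, by `|exp x - 1| ≤ |x| exp |x|` and `log r ≤ r - 1`.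
-/

open Real
open scoped RealInnerProductSpace

namespace Real

lemma abs_exp_sub_one_le_mul_exp_abs (x : ℝ) : |exp x - 1| ≤ |x| * exp |x| := by
  rcases le_total 0 x with hx | hx
  · rw [abs_of_nonneg hx, abs_of_nonneg (by linarith [add_one_le_exp x])]
    have h : 1 - x ≤ exp (-x) := by linarith [add_one_le_exp (-x)]
    have h' : exp x * (1 - x) ≤ 1 := by
      calc exp x * (1 - x) ≤ exp x * exp (-x) := by gcongr
        _ = 1 := by rw [← exp_add, add_neg_cancel, exp_zero]
    linarith
  · rw [abs_of_nonpos hx, abs_of_nonpos (by linarith [exp_le_one_iff.mpr hx])]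
    have h1 : 1 ≤ exp (-x) := one_le_exp (by linarith)
    nlinarith [add_one_le_exp x]

lemma abs_rpow_sub_one_le {r : ℝ} (hr : 1 ≤ r) (s : ℝ) :
    |r ^ s - 1| ≤ |s| * r ^ |s| * (r - 1) := by
  have hr0 : 0 < r := zero_lt_one.trans_le hr
  have hlog : 0 ≤ log r := log_nonneg hr
  have habs : |log r * s| = log r * |s| := by rw [abs_mul, abs_of_nonneg hlog]
  calc |r ^ s - 1| = |exp (log r * s) - 1| := by rw [rpow_def_of_pos hr0]
    _ ≤ log r * |s| * exp (log r * |s|) := by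
        simpa only [habs] using abs_exp_sub_one_le_mul_exp_abs (log r * s)
    _ = |s| * r ^ |s| * log r := by rw [← rpow_def_of_pos hr0]; ring
    _ ≤ |s| * r ^ |s| * (r - 1) := by
        gcongr
        linarith [log_le_sub_one_of_pos hr0]

lemma cos_arccos_div_two {t : ℝ} (ht₁ : -1 ≤ t) (ht₂ : t ≤ 1) :
    cos (arccos t / 2) = √((1 + t) / 2) := by
  rw [cos_half (by linarith [arccos_nonneg t, pi_pos]) (arccos_le_pi t), cos_arccos ht₁ ht₂]

lemma one_sub_le_arccos_sq_div_two {t : ℝ} (ht₁ : -1 ≤ t) (ht₂ : t ≤ 1) :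
    1 - t ≤ arccos t ^ 2 / 2 := by
  linarith [one_sub_sq_div_two_le_cos (x := arccos t), cos_arccos ht₁ ht₂]

end Real

lemma abs_japanese_bracket_ratio_sub_one_le (l n : ℝ) {t : ℝ} (ht₀ : 0 ≤ t) (ht₁ : t ≤ 1) :
    |(1 + n ^ 2) ^ (l / 2) * (1 + n ^ 2 * ((1 + t) / 2)) ^ (-l / 2) - 1|
      ≤ |l / 2| * 2 ^ |l / 2| * (1 - t) := by
  set a := 1 + n ^ 2 with ha
  set b := 1 + n ^ 2 * ((1 + t) / 2) with hb'
  have hn := sq_nonneg n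
  have hb : 0 < b := by positivity
  have hab : a ^ (l / 2) * b ^ (-l / 2) = (a / b) ^ (l / 2) := by
    rw [neg_div, rpow_neg hb.le, div_rpow (by positivity) hb.le]
    exact (div_eq_mul_inv _ _).symm
  have hr₁ : 1 ≤ a / b := by
    rw [le_div_iff₀ hb, ha, hb']; nlinarith
  have hr₂ : a / b ≤ 2 := by
    rw [div_le_iff₀ hb, ha, hb']; nlinarith
  have hr₃ : a / b - 1 ≤ 1 - t := by
    rw [div_sub_one hb.ne', div_le_iff₀ hb, ha, hb']
    nlinarith [mul_nonneg (sub_nonneg.2 ht₁) (add_nonneg zero_le_one (mul_nonneg hn ht₀))]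
  rw [hab]
  calc |(a / b) ^ (l / 2) - 1| ≤ |l / 2| * (a / b) ^ |l / 2| * (a / b - 1) :=
        abs_rpow_sub_one_le hr₁ _
    _ ≤ |l / 2| * 2 ^ |l / 2| * (1 - t) := by gcongr

section InnerProductSpace

variable {E : Type*} [NormedAddCommGroup E] [InnerProductSpace ℝ E]

lemma inner_inv_norm_smul_mem_Icc {u σ : E} (hσ : ‖σ‖ = 1) :
    ⟪‖u‖⁻¹ • u, σ⟫ ∈ Set.Icc (-1 : ℝ) 1 := by
  have hunit : ‖‖u‖⁻¹ • u‖ ≤ 1 := by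
    rw [norm_smul, norm_inv, norm_norm]
    exact inv_mul_le_one_of_le₀ le_rfl (norm_nonneg u)
  have h := abs_real_inner_le_norm (‖u‖⁻¹ • u) σ
  rw [hσ, mul_one] at h
  exact abs_le.mp (h.trans hunit)

lemma norm_half_add_norm_smul_sq (u : E) {σ : E} (hσ : ‖σ‖ = 1) :
    ‖(1 / 2 : ℝ) • (u + ‖u‖ • σ)‖ ^ 2 = ‖u‖ ^ 2 * ((1 + ⟪‖u‖⁻¹ • u, σ⟫) / 2) := by
  have h : ‖u‖ ^ 2 * ‖u‖⁻¹ = ‖u‖ := by rw [sq, mul_self_mul_inv]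
  rw [norm_smul, mul_pow, norm_add_sq_real, real_inner_smul_right, real_inner_smul_left,
    norm_smul, norm_norm, hσ, norm_of_nonneg (by norm_num : (0 : ℝ) ≤ 1 / 2)]
  linear_combination (-1 / 2 : ℝ) * ⟪u, σ⟫ * h

lemma norm_half_add_norm_smul (u : E) {σ : E} (hσ : ‖σ‖ = 1) :
    ‖(1 / 2 : ℝ) • (u + ‖u‖ • σ)‖ = ‖u‖ * cos (arccos ⟪‖u‖⁻¹ • u, σ⟫ / 2) := by
  obtain ⟨ht₁, ht₂⟩ := inner_inv_norm_smul_mem_Icc (u := u) hσ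
  calc ‖(1 / 2 : ℝ) • (u + ‖u‖ • σ)‖ = √(‖(1 / 2 : ℝ) • (u + ‖u‖ • σ)‖ ^ 2) :=
        (sqrt_sq (norm_nonneg _)).symm
    _ = √(‖u‖ ^ 2) * √((1 + ⟪‖u‖⁻¹ • u, σ⟫) / 2) := by
        rw [norm_half_add_norm_smul_sq u hσ, sqrt_mul (sq_nonneg _)]
    _ = ‖u‖ * cos (arccos ⟪‖u‖⁻¹ • u, σ⟫ / 2) := by
        rw [sqrt_sq (norm_nonneg u), cos_arccos_div_two ht₁ ht₂]

lemma half_add_norm_smul_ne_zero {u σ : E} (hu : u ≠ 0) (hσ : ‖σ‖ = 1)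
    (ht : -1 < ⟪‖u‖⁻¹ • u, σ⟫) : (1 / 2 : ℝ) • (u + ‖u‖ • σ) ≠ 0 := by
  have hpos : 0 < ‖(1 / 2 : ℝ) • (u + ‖u‖ • σ)‖ ^ 2 := by
    rw [norm_half_add_norm_smul_sq u hσ]
    have := norm_pos_iff.mpr hu
    have : 0 < (1 + ⟪‖u‖⁻¹ • u, σ⟫) / 2 := by linarith
    positivity
  exact norm_ne_zero_iff.mp fun h => by rw [h] at hpos; simp at hpos

end InnerProductSpace

theorem stmt_17 (l : ℝ) :
    ∃ C : ℝ, 0 < C ∧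
      ∀ u σ : EuclideanSpace ℝ (Fin 3), u ≠ 0 → ‖σ‖ = 1 →
        0 ≤ ⟪‖u‖⁻¹ • u, σ⟫ →
        (1 / 2 : ℝ) • (u + ‖u‖ • σ) ≠ 0 ∧
        ‖(‖u‖ / ‖(1 / 2 : ℝ) • (u + ‖u‖ • σ)‖) • ((1 / 2 : ℝ) • (u + ‖u‖ • σ))‖ = ‖u‖ ∧
        (1 + ‖(‖u‖ / ‖(1 / 2 : ℝ) • (u + ‖u‖ • σ)‖) • ((1 / 2 : ℝ) • (u + ‖u‖ • σ))‖ ^ 2)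
              ^ (l / 2)
          = (1 + ‖u‖ ^ 2) ^ (l / 2) ∧
        ‖(1 / 2 : ℝ) • (u + ‖u‖ • σ)‖
          = ‖u‖ * Real.cos (Real.arccos ⟪‖u‖⁻¹ • u, σ⟫ / 2) ∧
        (1 ≤ ‖u‖ →
          |(1 + ‖u‖ ^ 2) ^ (l / 2)
              * (1 + ‖(1 / 2 : ℝ) • (u + ‖u‖ • σ)‖ ^ 2) ^ (-l / 2) - 1|
            ≤ C * (Real.arccos ⟪‖u‖⁻¹ • u, σ⟫) ^ 2) := by
  set c := |l / 2| * 2 ^ |l / 2|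
  refine ⟨c + 1, by positivity, fun u σ hu hσ ht₀ => ?_⟩
  set t := ⟪‖u‖⁻¹ • u, σ⟫
  have hne := half_add_norm_smul_ne_zero hu hσ (by linarith)
  have hw : ‖(‖u‖ / ‖(1 / 2 : ℝ) • (u + ‖u‖ • σ)‖) • ((1 / 2 : ℝ) • (u + ‖u‖ • σ))‖ = ‖u‖ := by
    rw [div_eq_mul_inv]
    exact norm_smul_inv_norm' (norm_nonneg u) hne
  refine ⟨hne, hw, by rw [hw], norm_half_add_norm_smul u hσ, fun _ => ?_⟩
  obtain ⟨ht₁, ht₂⟩ := inner_inv_norm_smul_mem_Icc (u := u) hσ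
  have hθ := one_sub_le_arccos_sq_div_two ht₁ ht₂
  have hc : 0 ≤ c := by positivity
  rw [norm_half_add_norm_smul_sq u hσ]
  calc _ ≤ c * (1 - t) := abs_japanese_bracket_ratio_sub_one_le l ‖u‖ ht₀ ht₂
    _ ≤ (c + 1) * arccos t ^ 2 := by nlinarith [sq_nonneg (arccos t)]
end
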